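/- Conjugation of E·K^c by a q-exponential of E·K^b expands as follows: if E^N = 0, then for all a ∈ ℂ and b, c ∈ ℤ, exp_{q⁻²}(a·E·K^b)·E·K^c = (Σ_{j=0}^{N−1} ((q^{2(c−b)}; q⁻²)_j / (q⁻²; q⁻²)_j)·(a(1 − q⁻²))^j·(E·K^b)^j·E·K^c)·exp_{q⁻²}(a·E·K^b). -/

import Mathlib

/-- The q-number `(k)_q = (1 − q^k)/(1 − q)`. -/
noncomputable def qNum (q : ℂ) (k : ℕ) : ℂ := (1 - q ^ k) / (1 - q)

/-- The q-factorial `(k)_q! = (1)_q(2)_q⋯(k)_q`, with `(0)_q! = 1`. -/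
noncomputable def qFact (q : ℂ) : ℕ → ℂ
  | 0 => 1
  | k + 1 => qFact q k * qNum q (k + 1)

/-- The (truncated) q-exponential `exp_q(a) = Σ_{k=0}^{N−1} a^k/(k)_q!` of a nilpotent
element with `a^N = 0`. -/
noncomputable def expq {A : Type*} [Ring A] [Algebra ℂ A] (q : ℂ) (N : ℕ) (a : A) : A :=
  ∑ k ∈ Finset.range N, (qFact q k)⁻¹ • a ^ k

/-- The q-Pochhammer symbol `(y; p)_j = ∏_{i=0}^{j−1}(1 − y·p^i)`. -/
noncomputable def qPoch (y p : ℂ) (j : ℕ) : ℂ := ∏ i ∈ Finset.range j, (1 - y * p ^ i)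

noncomputable def qb (p : ℂ) : ℕ → ℕ → ℂ
  | 0, 0 => 1
  | 0, _ + 1 => 0
  | _ + 1, 0 => 1
  | n + 1, j + 1 => qb p n j + p ^ (j + 1) * qb p n (j + 1)

lemma qPoch_succ (y p : ℂ) (j : ℕ) : qPoch y p (j + 1) = qPoch y p j * (1 - y * p ^ j) :=
  Finset.prod_range_succ _ _

lemma qPoch_zero (y p : ℂ) : qPoch y p 0 = 1 := rfl

lemma qb_zero_right (p : ℂ) (n : ℕ) : qb p n 0 = 1 := by cases n <;> rfl

lemma qb_succ (p : ℂ) (n j : ℕ) :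
    qb p (n + 1) (j + 1) = qb p n j + p ^ (j + 1) * qb p n (j + 1) := rfl

lemma qb_eq_zero (p : ℂ) : ∀ n j, n < j → qb p n j = 0
  | 0, _ + 1, _ => rfl
  | n + 1, j + 1, h => by
    rw [qb_succ, qb_eq_zero p n j (by omega), qb_eq_zero p n (j + 1) (by omega)]; ring

lemma qb_mul (p : ℂ) : ∀ n j, j ≤ n →
    qb p n j * (qPoch p p j * qPoch p p (n - j)) = qPoch p p n
  | 0, 0, _ => by simp [qb, qPoch]
  | n + 1, 0, _ => by simp [qb_zero_right, qPoch_zero]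
  | n + 1, j + 1, h => by
    have hj : j ≤ n := by omega
    rcases eq_or_lt_of_le hj with heq | hlt
    · subst heq
      have h1 := qb_mul p j j le_rfl
      rw [Nat.sub_self, qPoch_zero, mul_one] at h1
      rw [qb_succ, qb_eq_zero p j (j + 1) (by omega)]
      simp only [Nat.sub_self, qPoch_zero, mul_one, qPoch_succ]
      linear_combination (1 - p * p ^ j) * h1
    · have hj1 : j + 1 ≤ n := hlt
      obtain ⟨m, rfl⟩ : ∃ m, n = j + 1 + m := ⟨n - j - 1, by omega⟩
      have h1 := qb_mul p (j + 1 + m) j (by omega)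
      have h2 := qb_mul p (j + 1 + m) (j + 1) hj1
      rw [qb_succ]
      have e1 : j + 1 + m - j = m + 1 := by omega
      have e2 : j + 1 + m - (j + 1) = m := by omega
      have e3 : j + 1 + m + 1 - (j + 1) = m + 1 := by omega
      rw [e1] at h1; rw [e2] at h2; rw [e3]
      rw [qPoch_succ p p (j + 1 + m), qPoch_succ p p j] at *
      rw [qPoch_succ p p m] at *
      linear_combination (1 - p * p ^ j) * h1 + (p * p ^ j) * (1 - p * p ^ m) * h2

lemma sum_qb (p μ : ℂ) : ∀ n : ℕ,
    ∑ j ∈ Finset.range (n + 1), qb p n j * ∏ i ∈ Finset.range j, (μ - p ^ i) = μ ^ n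
  | 0 => by simp [qb]
  | n + 1 => by
    have IH := sum_qb p μ n
    have e1 : ∑ j ∈ Finset.range (n + 1 + 1), qb p (n+1) j * ∏ i ∈ Finset.range j, (μ - p ^ i)
        = (∑ j ∈ Finset.range (n + 1), qb p n j * ∏ i ∈ Finset.range (j+1), (μ - p ^ i))
          + (∑ j ∈ Finset.range (n + 1),
              p ^ (j+1) * qb p n (j+1) * ∏ i ∈ Finset.range (j+1), (μ - p ^ i)) + 1 := by
      rw [Finset.sum_range_succ' _ (n + 1)]
      simp only [qb_succ, add_mul, qb_zero_right, Finset.prod_range_zero, mul_one, one_mul]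
      rw [Finset.sum_add_distrib]
    have e2 : ∑ j ∈ Finset.range (n + 1),
          p ^ (j+1) * qb p n (j+1) * ∏ i ∈ Finset.range (j+1), (μ - p ^ i)
        = (∑ j ∈ Finset.range (n + 1), p ^ j * qb p n j * ∏ i ∈ Finset.range j, (μ - p ^ i))
          - 1 := by
      have a1 := Finset.sum_range_succ'
        (fun j => p ^ j * qb p n j * ∏ i ∈ Finset.range j, (μ - p ^ i)) n
      have a2 := Finset.sum_range_succ
        (fun j => p ^ (j+1) * qb p n (j+1) * ∏ i ∈ Finset.range (j+1), (μ - p ^ i)) n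
      simp only [qb_eq_zero p n (n + 1) (by omega), mul_zero, zero_mul, add_zero,
        pow_zero, qb_zero_right, Finset.prod_range_zero, mul_one, one_mul] at a1 a2
      rw [a2]
      linear_combination -a1
    have e3 : (∑ j ∈ Finset.range (n+1), qb p n j * ∏ i ∈ Finset.range (j+1), (μ - p^i))
        + (∑ j ∈ Finset.range (n+1), p^j * qb p n j * ∏ i ∈ Finset.range j, (μ - p^i))
        = μ * ∑ j ∈ Finset.range (n+1), qb p n j * ∏ i ∈ Finset.range j, (μ - p^i) := by
      rw [Finset.mul_sum, ← Finset.sum_add_distrib]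
      apply Finset.sum_congr rfl
      intro j _
      rw [Finset.prod_range_succ]
      ring
    rw [e1, e2]
    linear_combination e3 + μ * IH

lemma qPoch_ne_zero (p : ℂ) (hp : ∀ k : ℕ, 0 < k → p ^ k ≠ 1) (k : ℕ) : qPoch p p k ≠ 0 := by
  rw [qPoch]
  apply Finset.prod_ne_zero_iff.mpr
  intro i _
  intro h
  apply hp (i + 1) (by omega)
  rw [pow_succ]
  linear_combination -h

lemma qFact_eq (p : ℂ) (hp1 : p ≠ 1) : ∀ k : ℕ, qFact p k = qPoch p p k / (1 - p) ^ k
  | 0 => by simp [qFact, qPoch_zero]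
  | k + 1 => by
    have h1p : (1 : ℂ) - p ≠ 0 := sub_ne_zero.mpr (Ne.symm hp1)
    rw [qFact, qFact_eq p hp1 k, qNum, qPoch_succ]
    rw [pow_succ p k]  -- ? p^(k+1) = p^k * p
    field_simp
    ring

lemma coeff_key (p t μ a : ℂ) (hp : ∀ k : ℕ, 0 < k → p ^ k ≠ 1) (htμ : t * μ = 1) (n : ℕ) :
    ∑ j ∈ Finset.range (n + 1),
      (qPoch t p j / qPoch p p j) * (a * (1 - p)) ^ j * μ ^ j
        * ((qFact p (n - j))⁻¹ * a ^ (n - j))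
      = (qFact p n)⁻¹ * a ^ n * μ ^ n := by
  have hp1 : p ≠ 1 := by have := hp 1 one_pos; simpa using this
  have h1p : (1 : ℂ) - p ≠ 0 := sub_ne_zero.mpr (Ne.symm hp1)
  have hQ := qPoch_ne_zero p hp
  have hφ : ∀ j : ℕ, μ ^ j * qPoch t p j = ∏ i ∈ Finset.range j, (μ - p ^ i) := by
    intro j
    rw [qPoch, ← Finset.card_range j, ← Finset.prod_const, Finset.card_range,
      ← Finset.prod_mul_distrib]
    apply Finset.prod_congr rfl
    intro i _
    linear_combination (-(p ^ i)) * htμ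
  have key : ∀ j ∈ Finset.range (n + 1),
      (qPoch t p j / qPoch p p j) * (a * (1 - p)) ^ j * μ ^ j
        * ((qFact p (n - j))⁻¹ * a ^ (n - j))
      = (a ^ n * (1 - p) ^ n / qPoch p p n)
          * (qb p n j * ∏ i ∈ Finset.range j, (μ - p ^ i)) := by
    intro j hj
    simp only [Finset.mem_range] at hj
    obtain ⟨m, rfl⟩ : ∃ m, n = j + m := ⟨n - j, by omega⟩
    rw [show j + m - j = m from by omega]
    have h2 := qb_mul p (j + m) j (by omega)
    rw [show j + m - j = m from by omega] at h2
    have h3 : qb p (j + m) j = qPoch p p (j + m) / (qPoch p p j * qPoch p p m) := by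
      rw [eq_div_iff (mul_ne_zero (hQ j) (hQ m))]
      exact h2
    rw [h3, ← hφ j, qFact_eq p hp1 m, mul_pow]
    field_simp [hQ j, hQ m, hQ (j + m)]
    ring
  rw [Finset.sum_congr rfl key, ← Finset.mul_sum, sum_qb, qFact_eq p hp1 n]
  rw [inv_div]
  ring

/-- Conjugation of `E·K^c` by a q-exponential of `E·K^b`:
`exp_{q⁻²}(a·E·K^b)·E·K^c
  = (Σ_{j=0}^{N−1} ((q^{2(c−b)}; q⁻²)_j / (q⁻²; q⁻²)_j)·(a(1 − q⁻²))^j·(E·K^b)^j·E·K^c)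
      ·exp_{q⁻²}(a·E·K^b)`. -/
theorem expq_conj_EKc {A : Type*} [Ring A] [Algebra ℂ A]
    (q : ℂ) (hq : ∀ k : ℕ, 0 < k → q ^ k ≠ 1) (E : A) (K : Aˣ)
    (hKE : (K : A) * E * (↑K⁻¹ : A) = q ^ 2 • E)
    (N : ℕ) (hE : E ^ N = 0) (a : ℂ) (b c : ℤ) :
    expq (q ^ (-2 : ℤ)) N (a • (E * ↑(K ^ b))) * (E * ↑(K ^ c))
      = (∑ j ∈ Finset.range N,
            (qPoch (q ^ (2 * (c - b))) (q ^ (-2 : ℤ)) j /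
                qPoch (q ^ (-2 : ℤ)) (q ^ (-2 : ℤ)) j) •
              ((a * (1 - q ^ (-2 : ℤ))) ^ j • ((E * ↑(K ^ b)) ^ j * (E * ↑(K ^ c)))))
          * expq (q ^ (-2 : ℤ)) N (a • (E * ↑(K ^ b))) := by
  by_cases hq0 : q = 0
  · subst hq0
    have hE0 : E = 0 := by
      have h : (K : A) * E * (↑K⁻¹ : A) = 0 := by rw [hKE]; norm_num
      have h2 := congrArg (fun x => (↑K⁻¹ : A) * x * (K : A)) h
      simpa [mul_assoc] using h2
    simp [hE0, expq]
  · have hq2 : (q : ℂ) ^ 2 ≠ 0 := pow_ne_zero 2 hq0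
    set p : ℂ := q ^ (-2 : ℤ) with hpdef
    have hp : ∀ k : ℕ, 0 < k → p ^ k ≠ 1 := by
      intro k hk h
      apply hq (2 * k) (by omega)
      have hpk : p ^ k = ((q ^ (2 * k) : ℂ))⁻¹ := by
        rw [hpdef, ← zpow_natCast (q ^ (-2 : ℤ)) k, ← zpow_mul, ← zpow_natCast q (2 * k),
          ← zpow_neg]
        congr 1
      rw [hpk, inv_eq_one] at h
      exact h
    have hKE' : (K : A) * E = (q ^ 2 : ℂ) • (E * (K : A)) := by
      have h := congrArg (fun x => x * (K : A)) hKE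
      simpa [mul_assoc, smul_mul_assoc] using h
    have hKinvE : (↑K⁻¹ : A) * E = ((q ^ 2 : ℂ))⁻¹ • (E * ↑K⁻¹) := by
      rw [eq_comm, inv_smul_eq_iff₀ hq2]
      have h := congrArg (fun x => (↑K⁻¹ : A) * x * (↑K⁻¹ : A)) hKE'
      simpa [mul_assoc, mul_smul_comm, smul_mul_assoc] using h
    have hq2z : (q : ℂ) ^ 2 = q ^ (2 : ℤ) := (zpow_natCast q 2).symm
    have hKm : ∀ m : ℤ, (↑(K ^ m) : A) * E = (q ^ (2 * m) : ℂ) • (E * ↑(K ^ m)) := by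
      intro m
      induction m using Int.induction_on with
      | zero => simp
      | succ m ih =>
        rw [zpow_add_one, Units.val_mul]
        calc (↑(K ^ (m : ℤ)) : A) * (K : A) * E
            = (↑(K ^ (m : ℤ)) : A) * ((K : A) * E) := by rw [mul_assoc]
          _ = (↑(K ^ (m : ℤ)) : A) * ((q ^ 2 : ℂ) • (E * (K : A))) := by rw [hKE']
          _ = (q ^ 2 : ℂ) • ((↑(K ^ (m : ℤ)) : A) * E * (K : A)) := by
              rw [mul_smul_comm, mul_assoc]
          _ = (q ^ 2 : ℂ) • ((q ^ (2 * (m : ℤ)) : ℂ) • (E * ↑(K ^ (m : ℤ)) * (K : A))) := by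
              rw [ih, smul_mul_assoc]
          _ = (q ^ (2 * ((m : ℤ) + 1)) : ℂ) • (E * (↑(K ^ (m : ℤ)) * (K : A))) := by
              rw [smul_smul, mul_assoc]
              congr 1
              rw [hq2z, ← zpow_add₀ hq0]
              congr 1
              ring
      | pred m ih =>
        rw [zpow_sub_one, Units.val_mul]
        calc (↑(K ^ (-(m : ℤ))) : A) * (↑K⁻¹ : A) * E
            = (↑(K ^ (-(m : ℤ))) : A) * ((↑K⁻¹ : A) * E) := by rw [mul_assoc]
          _ = (↑(K ^ (-(m : ℤ))) : A) * (((q ^ 2 : ℂ))⁻¹ • (E * (↑K⁻¹ : A))) := by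
              rw [hKinvE]
          _ = ((q ^ 2 : ℂ))⁻¹ • ((↑(K ^ (-(m : ℤ))) : A) * E * (↑K⁻¹ : A)) := by
              rw [mul_smul_comm, mul_assoc]
          _ = ((q ^ 2 : ℂ))⁻¹ • ((q ^ (2 * (-(m : ℤ))) : ℂ) • (E * ↑(K ^ (-(m : ℤ))) * (↑K⁻¹ : A))) := by
              rw [ih, smul_mul_assoc]
          _ = (q ^ (2 * (-(m : ℤ) - 1)) : ℂ) • (E * (↑(K ^ (-(m : ℤ))) * (↑K⁻¹ : A))) := by
              rw [smul_smul, mul_assoc]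
              congr 1
              rw [hq2z, ← zpow_neg, ← zpow_add₀ hq0]
              congr 1
              ring
    set X : A := E * (↑(K ^ b) : A) with hX
    set Y : A := E * (↑(K ^ c) : A) with hY
    set μ : ℂ := q ^ (2 * (b - c)) with hμ
    set t : ℂ := q ^ (2 * (c - b)) with ht
    have hprod : ∀ m m' : ℤ,
        (E * ↑(K ^ m)) * (E * ↑(K ^ m')) = (q ^ (2 * m) : ℂ) • (E * E * ↑(K ^ (m + m'))) := by
      intro m m'
      calc (E * ↑(K ^ m)) * (E * ↑(K ^ m'))
          = E * ((↑(K ^ m) * E) * (↑(K ^ m') : A)) := by rw [mul_assoc, mul_assoc]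
        _ = E * (((q ^ (2 * m) : ℂ) • (E * ↑(K ^ m))) * (↑(K ^ m') : A)) := by rw [hKm]
        _ = (q ^ (2 * m) : ℂ) • (E * E * ↑(K ^ (m + m'))) := by
            rw [smul_mul_assoc, mul_smul_comm, zpow_add K m m', Units.val_mul,
              mul_assoc, mul_assoc]
    have hXY : X * Y = μ • (Y * X) := by
      rw [hX, hY, hprod b c, hprod c b, smul_smul, show c + b = b + c from by ring]
      congr 1
      rw [hμ, ← zpow_add₀ hq0]
      congr 1
      ring
    have hXkY : ∀ k : ℕ, X ^ k * Y = μ ^ k • (Y * X ^ k) := by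
      intro k
      induction k with
      | zero => simp
      | succ k ih =>
        rw [pow_succ', mul_assoc, ih, mul_smul_comm, ← mul_assoc, hXY, smul_mul_assoc,
          smul_smul, mul_assoc, ← pow_succ', ← pow_succ]
    have hXpow0 : ∀ k : ℕ, ∃ s : ℂ, X ^ k = s • (E ^ k * ↑(K ^ ((k : ℤ) * b))) := by
      intro k
      induction k with
      | zero => exact ⟨1, by simp⟩
      | succ k ih =>
        obtain ⟨s, hs⟩ := ih
        refine ⟨s * q ^ (2 * ((k : ℤ) * b)), ?_⟩
        rw [pow_succ, hs, smul_mul_assoc, hX]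
        rw [show E ^ k * ↑(K ^ ((k : ℤ) * b)) * (E * ↑(K ^ b))
            = E ^ k * ((↑(K ^ ((k : ℤ) * b)) * E) * (↑(K ^ b) : A)) from by
          rw [mul_assoc, mul_assoc]]
        rw [hKm, smul_mul_assoc, mul_smul_comm, smul_smul]
        congr 1
        calc E ^ k * (E * ↑(K ^ ((k : ℤ) * b)) * ↑(K ^ b))
            = E ^ (k + 1) * (↑(K ^ ((k : ℤ) * b)) * ↑(K ^ b)) := by
              rw [pow_succ]; noncomm_ring
          _ = E ^ (k + 1) * ↑(K ^ ((↑(k + 1) : ℤ) * b)) := by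
              rw [← Units.val_mul, ← zpow_add K,
                show (k : ℤ) * b + b = ((k : ℕ) + 1 : ℤ) * b from by ring]
              norm_cast
    have hXbig : ∀ m : ℕ, N ≤ m → X ^ m = 0 := by
      intro m hm
      obtain ⟨s, hs⟩ := hXpow0 m
      obtain ⟨d, rfl⟩ : ∃ d, m = N + d := ⟨m - N, by omega⟩
      rw [hs, pow_add, hE, zero_mul, zero_mul, smul_zero]
    have htμ : t * μ = 1 := by
      rw [ht, hμ, ← zpow_add₀ hq0, show 2 * (c - b) + 2 * (b - c) = 0 from by ring, zpow_zero]
    have LHS_eq : expq p N (a • X) * Y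
        = ∑ n ∈ Finset.range N, ((qFact p n)⁻¹ * a ^ n * μ ^ n) • (Y * X ^ n) := by
      rw [expq, Finset.sum_mul]
      refine Finset.sum_congr rfl fun k _ => ?_
      rw [smul_pow, smul_smul, smul_mul_assoc, hXkY, smul_smul]
    set F : ℕ → ℕ → A := fun j k =>
      ((qPoch t p j / qPoch p p j) * (a * (1 - p)) ^ j * μ ^ j
        * ((qFact p k)⁻¹ * a ^ k)) • (Y * X ^ (j + k)) with hF
    have RHS_eq : (∑ j ∈ Finset.range N,
          (qPoch t p j / qPoch p p j) • ((a * (1 - p)) ^ j • (X ^ j * Y))) * expq p N (a • X)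
        = ∑ j ∈ Finset.range N, ∑ k ∈ Finset.range N, F j k := by
      rw [expq, Finset.sum_mul_sum]
      refine Finset.sum_congr rfl fun j _ => Finset.sum_congr rfl fun k _ => ?_
      rw [hF, smul_pow, smul_smul, smul_smul, smul_mul_smul_comm, hXkY j, smul_mul_assoc,
        mul_assoc Y (X ^ j) (X ^ k), ← pow_add, smul_smul]
      congr 1
      ring
    have trim : ∀ j ∈ Finset.range N,
        ∑ k ∈ Finset.range N, F j k = ∑ k ∈ Finset.range (N - j), F j k := by
      intro j hj
      refine (Finset.sum_subset (Finset.range_subset_range.mpr (by omega)) ?_).symm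
      intro k hk hk'
      simp only [Finset.mem_range, not_lt] at hk hk'
      rw [hF]
      simp only
      rw [hXbig (j + k) (by omega), mul_zero, smul_zero]
    have flip := Finset.sum_range_diag_flip N F
    have pern : ∀ n ∈ Finset.range N,
        ∑ j ∈ Finset.range (n + 1), F j (n - j)
        = ((qFact p n)⁻¹ * a ^ n * μ ^ n) • (Y * X ^ n) := by
      intro n _
      have step : ∀ j ∈ Finset.range (n + 1), F j (n - j)
          = ((qPoch t p j / qPoch p p j) * (a * (1 - p)) ^ j * μ ^ j
              * ((qFact p (n - j))⁻¹ * a ^ (n - j))) • (Y * X ^ n) := by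
        intro j hj
        simp only [Finset.mem_range] at hj
        rw [hF]
        simp only
        rw [show j + (n - j) = n from by omega]
      rw [Finset.sum_congr rfl step, ← Finset.sum_smul, coeff_key p t μ a hp htμ n]
    calc expq p N (a • X) * Y
        = ∑ n ∈ Finset.range N, ((qFact p n)⁻¹ * a ^ n * μ ^ n) • (Y * X ^ n) := LHS_eq
      _ = ∑ n ∈ Finset.range N, ∑ j ∈ Finset.range (n + 1), F j (n - j) :=
          (Finset.sum_congr rfl pern).symm
      _ = ∑ j ∈ Finset.range N, ∑ k ∈ Finset.range (N - j), F j k := flip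
      _ = ∑ j ∈ Finset.range N, ∑ k ∈ Finset.range N, F j k :=
          (Finset.sum_congr rfl trim).symm
      _ = (∑ j ∈ Finset.range N,
          (qPoch t p j / qPoch p p j) • ((a * (1 - p)) ^ j • (X ^ j * Y))) * expq p N (a • X) :=
          RHS_eq.symm
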